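/- arXiv:math/0312418 — 2 statements merged into one kernel-verified Lean document; each statement's English description precedes it below -/
import Mathlib

section
/- For m > 0, the parity of b(8m) equals the value of the binary digit of m immediately to the left of the rightmost 1 in the binary expansion of m. -/
/-- A partition written as a nondecreasing list of positive parts. -/
def IsPartList (l : List ℕ) : Prop :=
  l.Pairwise (· ≤ ·) ∧ ∀ p ∈ l, 0 < p

/-- A partition with distinct parts, written as a strictly increasing list of positive parts. -/
def DistinctPartList (l : List ℕ) : Prop :=
  l.Pairwise (· < ·) ∧ ∀ p ∈ l, 0 < p

/-- The s-non-squashing condition: (s-1)(p₁+⋯+p_j) ≤ p_{j+1} for 1 ≤ j ≤ k-1. -/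
def NSq (s : ℕ) (l : List ℕ) : Prop :=
  ∀ j, 0 < j → j < l.length → (s - 1) * (l.take j).sum ≤ l.getD j 0

/-- Number of non-squashing partitions of n into distinct parts. -/
noncomputable def b (n : ℕ) : ℕ :=
  {l : List ℕ | DistinctPartList l ∧ NSq 2 l ∧ l.sum = n}.ncard

/-!
Removing the largest part `p` of a non-squashing partition of `n > 0` leaves a non-squashing
partition of `n - p ≤ p`, and conversely any non-squashing partition of `n - p` with `n ≤ 2p`
can be extended by `p`, except `[p]` itself (possible only when `n = 2p`). Hence
`b n + [n even] = ∑_{r ≤ n/2} b r`, and differencing gives `b (2k+1) = b (2k) + 1` and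
`b (2k+2) = b (2k) + b (k+1)`. Modulo 2 these yield `b (4j+2) ≡ j + 1` and
`b (4j) ≡ j + b (2j)`, so for `m = 2^v u` with `u` odd, `b (8m) ≡ b (4m) ≡ ⋯ ≡ b (4u) ≡ (u-1)/2`.
-/

theorem List.eq_nil_of_sum_eq_zero_of_pos {u : List ℕ} (hpos : ∀ x ∈ u, 0 < x)
    (hu : u.sum = 0) : u = [] :=
  List.eq_nil_iff_forall_not_mem.2 fun x hx => (hpos x hx).ne' (List.sum_eq_zero_iff.1 hu x hx)

theorem List.lt_of_sum_le_of_ne_singleton {t : List ℕ} {p : ℕ} (hpos : ∀ x ∈ t, 0 < x)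
    (hsum : t.sum ≤ p) (ht : t ≠ [p]) {x : ℕ} (hx : x ∈ t) : x < p := by
  refine lt_of_le_of_ne ((List.le_sum_of_mem hx).trans hsum) fun hxp => ht ?_
  obtain ⟨u, w, rfl⟩ := List.mem_iff_append.mp hx
  simp only [List.mem_append, List.mem_cons] at hpos
  simp only [List.sum_append, List.sum_cons] at hsum
  rw [List.eq_nil_of_sum_eq_zero_of_pos (fun y hy => hpos y (.inl hy)) (by omega),
    List.eq_nil_of_sum_eq_zero_of_pos (fun y hy => hpos y (.inr (.inr hy))) (by omega), hxp]
  rfl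

theorem DistinctPartList.append_singleton_iff {t : List ℕ} {p : ℕ} :
    DistinctPartList (t ++ [p]) ↔ DistinctPartList t ∧ (∀ x ∈ t, x < p) ∧ 0 < p := by
  simp only [DistinctPartList, List.pairwise_append, List.pairwise_singleton, List.mem_singleton,
    forall_eq, true_and, List.mem_append, or_imp, forall_and]
  tauto

theorem NSq.append_singleton_iff {s : ℕ} {t : List ℕ} {p : ℕ} :
    NSq s (t ++ [p]) ↔ NSq s t ∧ (s - 1) * t.sum ≤ p := by
  have h_prefix {j : ℕ} (hj : j < t.length) : (s - 1) * ((t ++ [p]).take j).sum ≤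
      (t ++ [p]).getD j 0 ↔ (s - 1) * (t.take j).sum ≤ t.getD j 0 := by
    rw [List.take_append_of_le_length hj.le, List.getD_append _ _ _ _ hj]
  constructor
  · intro h
    refine ⟨fun j hj hjt => (h_prefix hjt).1 (h j hj ?_), ?_⟩
    · rw [List.length_append, List.length_singleton]
      omega
    rcases Nat.eq_zero_or_pos t.length with ht | ht
    · simp [List.length_eq_zero_iff.mp ht]
    · simpa [List.take_left] using h t.length ht (by simp)
  · rintro ⟨ht, hp⟩ j hj hjt
    rw [List.length_append, List.length_singleton] at hjt
    rcases Nat.lt_or_ge j t.length with hj' | hj'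
    · exact (h_prefix hj').2 (ht j hj hj')
    · obtain rfl : j = t.length := by omega
      simpa [List.take_left] using hp

open Finset

theorem Finset.sum_Icc_ite_eq_two_mul (n : ℕ) :
    ∑ p ∈ Icc ((n + 1) / 2) n, (if n = 2 * p then 1 else 0) = if Even n then 1 else 0 := by
  rcases Nat.even_or_odd' n with ⟨k, rfl | rfl⟩
  · rw [if_pos (even_two_mul k), sum_eq_single_of_mem k (mem_Icc.2 ⟨by omega, by omega⟩)
      fun p _ hp => if_neg (by omega), if_pos rfl]
  · rw [if_neg (by simp), sum_eq_zero fun p _ => if_neg (by omega)]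

theorem Finset.sum_Icc_sub_eq_sum_range {M : Type*} [AddCommMonoid M] (f : ℕ → M) (n : ℕ) :
    ∑ p ∈ Icc ((n + 1) / 2) n, f (n - p) = ∑ r ∈ range (n / 2 + 1), f r := by
  rw [← Ico_add_one_right_eq_Icc, sum_Ico_reflect _ _ le_rfl, range_eq_Ico]
  congr 2 <;> omega

namespace NonSquashing

def partitions (n : ℕ) : Set (List ℕ) := {l | DistinctPartList l ∧ NSq 2 l ∧ l.sum = n}

theorem append_singleton_mem_partitions_iff {n p : ℕ} {t : List ℕ} (hn : 0 < n) :
    t ++ [p] ∈ partitions n ↔ t ∈ partitions (n - p) ∧ t ≠ [p] ∧ p ≤ n ∧ n ≤ 2 * p := by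
  simp only [partitions, Set.mem_ofPred_eq, DistinctPartList.append_singleton_iff,
    NSq.append_singleton_iff, List.sum_append, List.sum_singleton, Nat.add_one_sub_one, one_mul]
  constructor
  · rintro ⟨⟨ht, hlt, hp⟩, ⟨hnsq, hle⟩, rfl⟩
    refine ⟨⟨ht, hnsq, by omega⟩, ?_, by omega, by omega⟩
    rintro rfl
    simp at hlt
  · rintro ⟨⟨ht, hnsq, hsum⟩, hne, hpn, hnp⟩
    exact ⟨⟨ht, fun x hx => List.lt_of_sum_le_of_ne_singleton ht.2 (by omega) hne hx, by omega⟩,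
      ⟨hnsq, by omega⟩, by omega⟩

theorem partitions_finite (n : ℕ) : (partitions n).Finite := by
  refine (List.finite_toSet (List.range (n + 1)).sublists).subset fun l hl => ?_
  obtain ⟨⟨hsorted, -⟩, -, hsum⟩ := hl
  have hsub : l ⊆ List.range (n + 1) := fun x hx =>
    List.mem_range.2 (Nat.lt_succ_of_le (hsum ▸ List.le_sum_of_mem hx))
  exact List.mem_sublists.2 <| List.sublist_of_subperm_of_pairwise (hsorted.nodup.subperm hsub)
    hsorted (List.pairwise_lt_range)

noncomputable def partitionsFinset (n : ℕ) : Finset (List ℕ) := (partitions_finite n).toFinset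

theorem b_eq_card (n : ℕ) : b n = (partitionsFinset n).card :=
  Set.ncard_eq_toFinset_card _ (partitions_finite n)

theorem mem_partitionsFinset {n : ℕ} {l : List ℕ} : l ∈ partitionsFinset n ↔ l ∈ partitions n :=
  (partitions_finite n).mem_toFinset

theorem singleton_mem_partitions_iff {n p : ℕ} : [p] ∈ partitions n ↔ 0 < p ∧ p = n := by
  refine ⟨fun ⟨⟨_, hpos⟩, _, hsum⟩ => ⟨hpos p (List.mem_singleton_self p), by simpa using hsum⟩, ?_⟩
  rintro ⟨hp, rfl⟩
  exact ⟨⟨List.pairwise_singleton _ _, by simpa using hp⟩,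
    fun j hj hj1 => absurd (List.length_singleton (a := p) ▸ hj1) (by omega), List.sum_singleton⟩

theorem partitionsFinset_eq_biUnion {n : ℕ} (hn : 0 < n) :
    partitionsFinset n = (Icc ((n + 1) / 2) n).biUnion
      fun p => ((partitionsFinset (n - p)).erase [p]).image (· ++ [p]) := by
  ext l
  simp only [mem_biUnion, mem_image, mem_erase, mem_Icc, mem_partitionsFinset]
  constructor
  · intro hl
    have hne : l ≠ [] := by rintro rfl; exact hn.ne' hl.2.2.symm
    rw [← List.dropLast_append_getLast hne, append_singleton_mem_partitions_iff hn] at hl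
    obtain ⟨ht, hsingle, hpn, hnp⟩ := hl
    exact ⟨l.getLast hne, ⟨by omega, hpn⟩, l.dropLast, ⟨hsingle, ht⟩,
      List.dropLast_append_getLast hne⟩
  · rintro ⟨p, ⟨hnp, hpn⟩, t, ⟨hsingle, ht⟩, rfl⟩
    exact (append_singleton_mem_partitions_iff hn).2 ⟨ht, hsingle, hpn, by omega⟩

theorem b_add_ite_even {n : ℕ} (hn : 0 < n) :
    b n + (if Even n then 1 else 0) = ∑ r ∈ range (n / 2 + 1), b r := by
  have hcard : b n = ∑ p ∈ Icc ((n + 1) / 2) n, ((partitionsFinset (n - p)).erase [p]).card := by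
    rw [b_eq_card, partitionsFinset_eq_biUnion hn, card_biUnion]
    · exact sum_congr rfl fun p _ => card_image_of_injective _ (List.append_left_injective [p])
    · intro p _ q _ hpq
      simp only [Function.onFun, disjoint_left, mem_image]
      rintro l ⟨t, -, rfl⟩ ⟨u, -, hu⟩
      exact hpq (List.singleton_inj.1 (List.append_inj' hu rfl).2).symm
  have herase : ∀ p ∈ Icc ((n + 1) / 2) n,
      ((partitionsFinset (n - p)).erase [p]).card + (if n = 2 * p then 1 else 0) = b (n - p) := by
    intro p hp
    have hmem : [p] ∈ partitionsFinset (n - p) ↔ n = 2 * p := by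
      rw [mem_Icc] at hp
      rw [mem_partitionsFinset, singleton_mem_partitions_iff]
      omega
    rw [b_eq_card]
    by_cases h : n = 2 * p
    · rw [if_pos h, card_erase_add_one (hmem.2 h)]
    · rw [if_neg h, erase_eq_of_notMem (mt hmem.1 h), add_zero]
  rw [hcard, ← sum_Icc_sub_eq_sum_range, ← sum_Icc_ite_eq_two_mul, ← sum_add_distrib]
  exact sum_congr rfl herase

theorem b_zero : b 0 = 1 := by
  refine Set.ncard_eq_one.2 ⟨[], Set.ext fun l => ⟨fun hl => ?_, ?_⟩⟩
  · exact List.eq_nil_of_sum_eq_zero_of_pos hl.1.2 hl.2.2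
  · rintro rfl
    simp [DistinctPartList, NSq]

theorem b_two : b 2 = 1 := by
  have h1 : b 1 = b 0 := by simpa using b_add_ite_even one_pos
  have h2 : b 2 + 1 = b 0 + b 1 := by simpa [sum_range_succ] using b_add_ite_even two_pos
  rw [b_zero] at h1 h2
  omega

theorem b_two_mul_add_one {k : ℕ} (hk : 0 < k) : b (2 * k + 1) = b (2 * k) + 1 := by
  have hodd := b_add_ite_even (n := 2 * k + 1) (by omega)
  have heven := b_add_ite_even (n := 2 * k) (by omega)
  rw [if_neg (by simp), show (2 * k + 1) / 2 = k by omega] at hodd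
  rw [if_pos (by simp), show 2 * k / 2 = k by omega] at heven
  omega

theorem b_two_mul_add_two {k : ℕ} (hk : 0 < k) : b (2 * k + 2) = b (2 * k) + b (k + 1) := by
  have hnext := b_add_ite_even (n := 2 * k + 2) (by omega)
  have heven := b_add_ite_even (n := 2 * k) (by omega)
  rw [if_pos (by simp [parity_simps]), show (2 * k + 2) / 2 = k + 1 by omega,
    sum_range_succ] at hnext
  rw [if_pos (by simp), show 2 * k / 2 = k by omega] at heven
  omega

theorem b_four_mul_add_two_mod_two (j : ℕ) : b (4 * j + 2) % 2 = (j + 1) % 2 := by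
  induction j with
  | zero => simp [b_two]
  | succ j ih =>
    have h1 : b (4 * (j + 1) + 2) = b (4 * j + 4) + b (2 * (j + 1) + 1) := by
      rw [show 4 * (j + 1) + 2 = 2 * (2 * j + 2) + 2 by ring,
        show 4 * j + 4 = 2 * (2 * j + 2) by ring]
      exact b_two_mul_add_two (by omega)
    have h2 : b (4 * j + 4) = b (4 * j + 2) + b (2 * (j + 1)) := by
      rw [show 4 * j + 4 = 2 * (2 * j + 1) + 2 by ring, show 4 * j + 2 = 2 * (2 * j + 1) by ring]
      exact b_two_mul_add_two (by omega)
    rw [h1, h2, b_two_mul_add_one (k := j + 1) (by omega)]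
    omega

theorem b_four_mul_mod_two {j : ℕ} (hj : 0 < j) : b (4 * j) % 2 = (j + b (2 * j)) % 2 := by
  obtain ⟨i, rfl⟩ : ∃ i, j = i + 1 := ⟨j - 1, by omega⟩
  have h : b (4 * (i + 1)) = b (4 * i + 2) + b (2 * (i + 1)) := by
    rw [show 4 * (i + 1) = 2 * (2 * i + 1) + 2 by ring, show 4 * i + 2 = 2 * (2 * i + 1) by ring,
      show 2 * (i + 1) = 2 * i + 1 + 1 by ring]
    exact b_two_mul_add_two (by omega)
  have := b_four_mul_add_two_mod_two i
  omega

theorem b_two_pow_mul_odd_mod_two {u : ℕ} (hu : Odd u) (a : ℕ) :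
    b (2 ^ (a + 2) * u) % 2 = u / 2 % 2 := by
  induction a with
  | zero =>
    obtain ⟨i, rfl⟩ := hu
    have h := b_four_mul_mod_two (j := 2 * i + 1) (by omega)
    rw [show 2 * (2 * i + 1) = 4 * i + 2 by ring] at h
    rw [show 2 ^ (0 + 2) * (2 * i + 1) = 4 * (2 * i + 1) by ring]
    have := b_four_mul_add_two_mod_two i
    omega
  | succ a ih =>
    have h := b_four_mul_mod_two (j := 2 ^ (a + 1) * u) (by have := hu.pos; positivity)
    rw [show 4 * (2 ^ (a + 1) * u) = 2 ^ (a + 1 + 2) * u by ring,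
      show 2 * (2 ^ (a + 1) * u) = 2 ^ (a + 2) * u by ring] at h
    have heven : 2 ^ (a + 1) * u % 2 = 0 := by simp [Nat.mul_mod, Nat.pow_mod]
    omega

end NonSquashing

theorem stmt_11 (m : ℕ) (hm : 0 < m) :
    b (8 * m) % 2 = (m / 2 ^ (padicValNat 2 m) / 2) % 2 := by
  have hodd : Odd (m / 2 ^ padicValNat 2 m) := by
    have := Nat.not_dvd_ordCompl Nat.prime_two hm.ne'
    rwa [Nat.factorization_def _ Nat.prime_two, ← even_iff_two_dvd, Nat.not_even_iff_odd] at this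
  have h8m : 8 * m = 2 ^ (padicValNat 2 m + 1 + 2) * (m / 2 ^ padicValNat 2 m) := by
    conv_lhs => rw [← Nat.mul_div_cancel' (pow_padicValNat_dvd (p := 2) (n := m))]
    ring
  rw [h8m, NonSquashing.b_two_pow_mul_odd_mod_two hodd]
end

section
/- For k ≥ 1, the number of non-squashing partitions of n into exactly k parts equals the number of partitions of n into powers of 2 whose largest part is exactly 2^{k-1}. -/
/-- Number of non-squashing partitions of n into exactly k parts. -/
noncomputable def a (n k : ℕ) : ℕ :=
  {l : List ℕ | IsPartList l ∧ NSq 2 l ∧ l.sum = n ∧ l.length = k}.ncard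

lemma nsq_append_singleton (s : ℕ) (l : List ℕ) (p : ℕ) :
    NSq s (l ++ [p]) ↔ NSq s l ∧ (s - 1) * l.sum ≤ p := by
  have take_eq : ∀ j ≤ l.length, (l ++ [p]).take j = l.take j := fun j hj =>
    List.take_append_of_le_length hj
  have getD_eq : ∀ j < l.length, (l ++ [p]).getD j 0 = l.getD j 0 := List.getD_append _ _ _
  have getD_length : (l ++ [p]).getD l.length 0 = p := by simp
  simp only [NSq, List.length_append, List.length_singleton]
  constructor
  · intro h
    refine ⟨fun j hj hjl => ?_, ?_⟩
    · rw [← take_eq j hjl.le, ← getD_eq j hjl]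
      exact h j hj (by omega)
    · rcases Nat.eq_zero_or_pos l.length with hl | hl
      · simp [List.length_eq_zero_iff.1 hl]
      · simpa [take_eq l.length le_rfl, getD_length] using h l.length hl (by omega)
  · rintro ⟨h, hlast⟩ j hj hjl
    rcases Nat.lt_or_ge j l.length with hjl' | hjl'
    · rw [take_eq j hjl'.le, getD_eq j hjl']
      exact h j hj hjl'
    · obtain rfl : j = l.length := by omega
      simpa [take_eq l.length le_rfl, getD_length] using hlast

lemma isPartList_append_singleton (l : List ℕ) (p : ℕ) :
    IsPartList (l ++ [p]) ↔ IsPartList l ∧ (∀ x ∈ l, x ≤ p) ∧ 0 < p := by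
  simp only [IsPartList, List.pairwise_append, List.pairwise_singleton, List.mem_append,
    List.mem_singleton, true_and, forall_eq]
  constructor
  · rintro ⟨⟨hs, hle⟩, hpos⟩
    exact ⟨⟨hs, fun x hx => hpos x (Or.inl hx)⟩, hle, hpos p (Or.inr rfl)⟩
  · rintro ⟨⟨hs, hpos⟩, hle, hp⟩
    exact ⟨⟨hs, hle⟩, fun x hx => hx.elim (hpos x) (· ▸ hp)⟩

lemma IsPartList.sum_pos {l : List ℕ} (hl : IsPartList l) (hne : l ≠ []) : 0 < l.sum :=
  List.sum_pos l hl.2 hne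

def nonSquashingParts (n k : ℕ) : Set (List ℕ) :=
  {l | IsPartList l ∧ NSq 2 l ∧ l.sum = n ∧ l.length = k}

lemma mem_nonSquashingParts_one {n : ℕ} {l : List ℕ} :
    l ∈ nonSquashingParts n 1 ↔ l = [n] ∧ 0 < n := by
  constructor
  · rintro ⟨⟨-, hpos⟩, -, rfl, hlen⟩
    obtain ⟨x, rfl⟩ := List.length_eq_one_iff.1 hlen
    simpa using hpos
  · rintro ⟨rfl, hn⟩
    refine ⟨⟨List.pairwise_singleton _ n, by simpa using hn⟩, ?_, by simp, rfl⟩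
    intro j hj hjl
    simp at hjl
    omega

lemma mem_nonSquashingParts_succ {n k : ℕ} (hk : k ≠ 0) {l : List ℕ} :
    l ∈ nonSquashingParts n (k + 1) ↔
      ∃ l' p, l = l' ++ [p] ∧ l' ∈ nonSquashingParts l'.sum k ∧ l'.sum ≤ p ∧ l'.sum + p = n := by
  constructor
  · rintro ⟨hpart, hnsq, rfl, hlen⟩
    obtain ⟨l', p, rfl⟩ := (List.eq_nil_or_concat' l).resolve_left (by rintro rfl; simp at hlen)
    rw [isPartList_append_singleton] at hpart
    rw [nsq_append_singleton] at hnsq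
    exact ⟨l', p, rfl, ⟨hpart.1, hnsq.1, rfl, by simpa using hlen⟩, by simpa using hnsq.2,
      by simp⟩
  · rintro ⟨l', p, rfl, ⟨hpart, hnsq, -, hlen⟩, hle, rfl⟩
    have hne : l' ≠ [] := by rintro rfl; exact hk hlen.symm
    refine ⟨?_, (nsq_append_singleton 2 l' p).2 ⟨hnsq, by simpa using hle⟩, by simp,
      by simp [hlen]⟩
    exact (isPartList_append_singleton l' p).2 ⟨hpart,
      fun x hx => (List.le_sum_of_mem hx).trans hle, (hpart.sum_pos hne).trans_le hle⟩

def onesAppendDouble (r : ℕ) (b : List ℕ) : List ℕ :=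
  List.replicate r 1 ++ b.map (2 * ·)

section onesAppendDouble

variable {r : ℕ} {b : List ℕ}

lemma sum_onesAppendDouble : (onesAppendDouble r b).sum = r + 2 * b.sum := by
  rw [onesAppendDouble, List.sum_append, List.sum_replicate, smul_eq_mul, mul_one,
    List.sum_map_mul_left, List.map_id']

lemma isPartList_onesAppendDouble : IsPartList (onesAppendDouble r b) ↔ IsPartList b := by
  simp only [IsPartList, onesAppendDouble, List.pairwise_append, List.pairwise_map,
    List.pairwise_replicate, le_refl, or_true, List.mem_append, List.mem_replicate,
    List.mem_map]
  constructor
  · rintro ⟨⟨-, hs, -⟩, hpos⟩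
    exact ⟨hs.imp (by omega), fun x hx => by have := hpos (2 * x) (Or.inr ⟨x, hx, rfl⟩); omega⟩
  · rintro ⟨hs, hpos⟩
    refine ⟨⟨trivial, hs.imp (by omega), ?_⟩, ?_⟩
    · rintro _ ⟨-, rfl⟩ _ ⟨y, hy, rfl⟩
      have := hpos y hy
      omega
    · rintro _ (⟨-, rfl⟩ | ⟨y, hy, rfl⟩)
      · exact one_pos
      · have := hpos y hy
        omega

lemma forall_eq_two_pow_onesAppendDouble :
    (∀ p ∈ onesAppendDouble r b, ∃ i, p = 2 ^ i) ↔ ∀ p ∈ b, ∃ i, p = 2 ^ i := by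
  simp only [onesAppendDouble, List.mem_append, List.mem_replicate, List.mem_map]
  constructor
  · intro h x hx
    obtain ⟨i, hi⟩ := h (2 * x) (Or.inr ⟨x, hx, rfl⟩)
    cases i with
    | zero => omega
    | succ i => exact ⟨i, by rw [pow_succ] at hi; omega⟩
  · rintro h _ (⟨-, rfl⟩ | ⟨x, hx, rfl⟩)
    · exact ⟨0, rfl⟩
    · obtain ⟨i, rfl⟩ := h x hx
      exact ⟨i + 1, by ring⟩

lemma two_pow_succ_mem_onesAppendDouble {k : ℕ} :
    2 ^ (k + 1) ∈ onesAppendDouble r b ↔ 2 ^ k ∈ b := by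
  simp [onesAppendDouble, pow_succ']

lemma forall_le_two_pow_succ_onesAppendDouble {k : ℕ} :
    (∀ p ∈ onesAppendDouble r b, p ≤ 2 ^ (k + 1)) ↔ ∀ p ∈ b, p ≤ 2 ^ k := by
  have := Nat.one_le_two_pow (n := k)
  simp only [onesAppendDouble, List.mem_append, List.mem_replicate, List.mem_map, pow_succ]
  constructor
  · intro h x hx
    have := h (2 * x) (Or.inr ⟨x, hx, rfl⟩)
    omega
  · rintro h _ (⟨-, rfl⟩ | ⟨x, hx, rfl⟩)
    · omega
    · have := h x hx
      omega

end onesAppendDouble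

lemma onesAppendDouble_inj {r₁ r₂ : ℕ} {b₁ b₂ : List ℕ} :
    onesAppendDouble r₁ b₁ = onesAppendDouble r₂ b₂ ↔ r₁ = r₂ ∧ b₁ = b₂ := by
  refine ⟨fun h => ?_, by rintro ⟨rfl, rfl⟩; rfl⟩
  -- doubled parts are never `1`, so `r` is the number of ones
  have count_one : ∀ r b, (onesAppendDouble r b).count 1 = r := fun r b => by
    simp [onesAppendDouble, List.count_append, List.count_eq_zero]
  have hr : r₁ = r₂ := by rw [← count_one r₁ b₁, h, count_one]
  subst hr
  refine ⟨rfl, List.map_injective_iff.2 (fun x y hxy => ?_) (List.append_cancel_left h)⟩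
  omega

lemma exists_eq_onesAppendDouble {b : List ℕ} (hb : IsPartList b)
    (hpar : ∀ p ∈ b, p = 1 ∨ Even p) : ∃ r b', b = onesAppendDouble r b' := by
  induction b with
  | nil => exact ⟨0, [], rfl⟩
  | cons x t ih =>
    obtain ⟨hs, hpos⟩ := hb
    obtain ⟨r, t', rfl⟩ :=
      ih ⟨hs.of_cons, fun p hp => hpos p (by simp [hp])⟩ (fun p hp => hpar p (by simp [hp]))
    rcases hpar x (by simp) with rfl | ⟨y, rfl⟩
    · exact ⟨r + 1, t', by simp [onesAppendDouble, List.replicate_succ]⟩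
    · -- an even part is at least `2`, so every later part is too and there are no ones
      have hr : r = 0 := by
        by_contra hr
        have h1 := List.rel_of_pairwise_cons hs
          (List.mem_append_left _ (List.mem_replicate.2 ⟨hr, rfl⟩))
        have := hpos (y + y) (by simp)
        omega
      subst hr
      exact ⟨0, y :: t', by simp [onesAppendDouble, two_mul]⟩

def binaryParts (n k : ℕ) : Set (List ℕ) :=
  {l | IsPartList l ∧ (∀ p ∈ l, ∃ i, p = 2 ^ i) ∧ l.sum = n ∧ 2 ^ k ∈ l ∧ ∀ p ∈ l, p ≤ 2 ^ k}

lemma mem_binaryParts_zero {n : ℕ} {l : List ℕ} :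
    l ∈ binaryParts n 0 ↔ l = List.replicate n 1 ∧ 0 < n := by
  constructor
  · rintro ⟨⟨-, hpos⟩, -, rfl, hone, hle⟩
    have hl : l = List.replicate l.length 1 :=
      List.eq_replicate_iff.2 ⟨rfl, fun x hx => le_antisymm (hle x hx) (hpos x hx)⟩
    rw [hl]
    simpa [List.length_pos_iff] using List.ne_nil_of_mem hone
  · rintro ⟨rfl, hn⟩
    refine ⟨⟨by simp [List.pairwise_replicate], ?_⟩, ?_, by simp, by simp [hn.ne'], ?_⟩ <;>
      intro x hx <;> obtain rfl := List.eq_of_mem_replicate hx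
    exacts [one_pos, ⟨0, rfl⟩, le_rfl]

lemma mem_binaryParts_succ {n k : ℕ} {b : List ℕ} :
    b ∈ binaryParts n (k + 1) ↔
      ∃ r b', b = onesAppendDouble r b' ∧ b' ∈ binaryParts b'.sum k ∧ r + 2 * b'.sum = n := by
  constructor
  · rintro ⟨hpart, hpow, rfl, hmem, hle⟩
    have hpar : ∀ p ∈ b, p = 1 ∨ Even p := fun p hp => by
      obtain ⟨i, rfl⟩ := hpow p hp
      rcases i with _ | i
      · exact Or.inl rfl
      · exact Or.inr (Nat.even_pow.2 ⟨even_two, i.succ_ne_zero⟩)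
    obtain ⟨r, b', rfl⟩ := exists_eq_onesAppendDouble hpart hpar
    rw [isPartList_onesAppendDouble] at hpart
    rw [forall_eq_two_pow_onesAppendDouble] at hpow
    rw [two_pow_succ_mem_onesAppendDouble] at hmem
    rw [forall_le_two_pow_succ_onesAppendDouble] at hle
    exact ⟨r, b', rfl, ⟨hpart, hpow, rfl, hmem, hle⟩, sum_onesAppendDouble.symm⟩
  · rintro ⟨r, b', rfl, ⟨hpart, hpow, -, hmem, hle⟩, rfl⟩
    exact ⟨isPartList_onesAppendDouble.2 hpart, forall_eq_two_pow_onesAppendDouble.2 hpow,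
      sum_onesAppendDouble, two_pow_succ_mem_onesAppendDouble.2 hmem,
      forall_le_two_pow_succ_onesAppendDouble.2 hle⟩

def toBinaryRev : List ℕ → List ℕ
  | [] => []
  | p :: l => onesAppendDouble (p - l.sum) (toBinaryRev l)

def toBinary (l : List ℕ) : List ℕ :=
  toBinaryRev l.reverse

lemma toBinary_append_singleton (l : List ℕ) (p : ℕ) :
    toBinary (l ++ [p]) = onesAppendDouble (p - l.sum) (toBinary l) := by
  simp [toBinary, toBinaryRev, List.sum_reverse]

lemma bijOn_toBinary_one (n : ℕ) :
    Set.BijOn toBinary (nonSquashingParts n 1) (binaryParts n 0) := by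
  have toBinary_singleton : toBinary [n] = List.replicate n 1 := by
    simp [toBinary, toBinaryRev, onesAppendDouble]
  refine ⟨?_, ?_, ?_⟩
  · intro l hl
    obtain ⟨rfl, hn⟩ := mem_nonSquashingParts_one.1 hl
    exact mem_binaryParts_zero.2 ⟨toBinary_singleton, hn⟩
  · intro l₁ h₁ l₂ h₂ _
    rw [(mem_nonSquashingParts_one.1 h₁).1, (mem_nonSquashingParts_one.1 h₂).1]
  · intro b hb
    obtain ⟨rfl, hn⟩ := mem_binaryParts_zero.1 hb
    exact ⟨[n], mem_nonSquashingParts_one.2 ⟨rfl, hn⟩, toBinary_singleton⟩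

section succ

variable {k : ℕ}

lemma mapsTo_toBinary_succ
    (ih : ∀ m, Set.MapsTo toBinary (nonSquashingParts m (k + 1)) (binaryParts m k)) (n : ℕ) :
    Set.MapsTo toBinary (nonSquashingParts n (k + 2)) (binaryParts n (k + 1)) := by
  intro l hl
  obtain ⟨l', p, rfl, hl', hle, rfl⟩ := (mem_nonSquashingParts_succ k.succ_ne_zero).1 hl
  have hb := ih _ hl'
  rw [toBinary_append_singleton]
  refine mem_binaryParts_succ.2 ⟨p - l'.sum, toBinary l', rfl, ?_, ?_⟩ <;> rw [hb.2.2.1]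
  · exact hb
  · omega

lemma injOn_toBinary_succ
    (ih : ∀ m, Set.BijOn toBinary (nonSquashingParts m (k + 1)) (binaryParts m k)) (n : ℕ) :
    Set.InjOn toBinary (nonSquashingParts n (k + 2)) := by
  intro l₁ h₁ l₂ h₂ heq
  obtain ⟨l₁', p₁, rfl, hl₁, hle₁, hsum₁⟩ := (mem_nonSquashingParts_succ k.succ_ne_zero).1 h₁
  obtain ⟨l₂', p₂, rfl, hl₂, hle₂, hsum₂⟩ := (mem_nonSquashingParts_succ k.succ_ne_zero).1 h₂
  rw [toBinary_append_singleton, toBinary_append_singleton, onesAppendDouble_inj] at heq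
  have hsum : l₁'.sum = l₂'.sum := by
    rw [← ((ih _).mapsTo hl₁).2.2.1, ← ((ih _).mapsTo hl₂).2.2.1, heq.2]
  rw [← hsum] at hl₂
  obtain rfl := (ih _).injOn hl₁ hl₂ heq.2
  obtain rfl : p₁ = p₂ := by omega
  rfl

lemma surjOn_toBinary_succ
    (ih : ∀ m, Set.SurjOn toBinary (nonSquashingParts m (k + 1)) (binaryParts m k)) (n : ℕ) :
    Set.SurjOn toBinary (nonSquashingParts n (k + 2)) (binaryParts n (k + 1)) := by
  intro b hb
  obtain ⟨r, b', rfl, hb', rfl⟩ := mem_binaryParts_succ.1 hb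
  obtain ⟨l', hl', rfl⟩ := ih _ hb'
  have hsum : l'.sum = (toBinary l').sum := hl'.2.2.1
  refine ⟨l' ++ [l'.sum + r], ?_, by rw [toBinary_append_singleton, Nat.add_sub_cancel_left]⟩
  exact (mem_nonSquashingParts_succ k.succ_ne_zero).2
    ⟨l', _, rfl, by rwa [hsum], by omega, by omega⟩

end succ

theorem bijOn_toBinary (n k : ℕ) :
    Set.BijOn toBinary (nonSquashingParts n (k + 1)) (binaryParts n k) := by
  induction k generalizing n with
  | zero => exact bijOn_toBinary_one n
  | succ k ih =>
    exact ⟨mapsTo_toBinary_succ (fun m => (ih m).mapsTo) n, injOn_toBinary_succ ih n,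
      surjOn_toBinary_succ (fun m => (ih m).surjOn) n⟩

theorem stmt_14 (n k : ℕ) (hk : 1 ≤ k) :
    a n k = {l : List ℕ | IsPartList l ∧ (∀ p ∈ l, ∃ i, p = 2 ^ i) ∧ l.sum = n ∧
      (2 : ℕ) ^ (k - 1) ∈ l ∧ ∀ p ∈ l, p ≤ 2 ^ (k - 1)}.ncard := by
  obtain ⟨k, rfl⟩ := Nat.exists_eq_add_of_le' hk
  show (nonSquashingParts n (k + 1)).ncard = (binaryParts n k).ncard
  exact (bijOn_toBinary n k).ncard_eq
end
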